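/- Let v_1, …, v_n be unit vectors in ℂ^d with d ≥ 1. If u is a unit vector that maximizes the product ∏_{k=1}^n |⟨v_k, v⟩| over all unit vectors v in ℂ^d, then |⟨v_k, u⟩| ≥ 1/√n for every k = 1, …, n. -/

import Mathlib

/-!
Write `u = y + a • v j` with `a = ⟪v j, u⟫` and `y ⟂ v j`. On the complex line `z ↦ y + z • v j`
the norm is `√(1 - |a|² + |z|²)` and the `j`-th factor of the product is `|z|`, so maximality
of `u` gives `|z| |h z| ≤ M (1 - |a|² + |z|²)^(n/2)`, where `h` is the polynomial formed by the
other factors and `M` is the maximum, with equality at `z = a`. The maximum modulus principle on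
the disc of radius `r ≥ |a|` then yields `r² ≤ |a|² (1 - |a|² + r²)ⁿ`. If `|a|² < 1/n`, the
choice `r² = 1/n` contradicts `(1 - n y) (1 + y)ⁿ < e^(-n y) e^(n y) = 1` for `y = 1/n - |a|²`.
-/

open Finset Metric
open scoped InnerProductSpace

section

variable {𝕜 E ι : Type*} [RCLike 𝕜] [NormedAddCommGroup E] [InnerProductSpace 𝕜 E]

lemma exists_forall_inner_ne_zero [Finite ι] {v : ι → E} (hv : ∀ k, v k ≠ 0) :
    ∃ w : E, ∀ k, ⟪v k, w⟫_𝕜 ≠ 0 :=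
  Module.Dual.exists_forall_ne_zero_of_forall_exists (fun k => innerₛₗ 𝕜 (v k))
    fun k => ⟨v k, by simpa using hv k⟩

lemma prod_norm_inner_le_mul_norm_pow [Fintype ι] {v : ι → E} {u : E}
    (hmax : ∀ w : E, ‖w‖ = 1 → ∏ k, ‖⟪v k, w⟫_𝕜‖ ≤ ∏ k, ‖⟪v k, u⟫_𝕜‖) (w : E) :
    ∏ k, ‖⟪v k, w⟫_𝕜‖ ≤ (∏ k, ‖⟪v k, u⟫_𝕜‖) * ‖w‖ ^ Fintype.card ι := by
  rcases eq_or_ne w 0 with rfl | hw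
  · rcases isEmpty_or_nonempty ι with hι | hι
    · simp
    · simp [zero_pow Fintype.card_ne_zero]
  have hnorm : 0 < ‖w‖ := norm_pos_iff.2 hw
  have h := hmax (((‖w‖ : 𝕜))⁻¹ • w) (norm_smul_inv_norm hw)
  simp only [inner_smul_right, norm_mul, norm_inv, RCLike.norm_ofReal, abs_norm, prod_mul_distrib,
    prod_const, card_univ, inv_pow] at h
  rwa [inv_mul_le_iff₀ (by positivity), mul_comm] at h

end

lemma one_sub_mul_mul_one_add_pow_lt_one {n : ℕ} (hn : 0 < n) {y : ℝ} (hy : 0 < y) :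
    (1 - n * y) * (1 + y) ^ n < 1 := by
  have hny : 0 < n * y := by positivity
  rcases lt_or_ge 1 (n * y) with hlt | hle
  · nlinarith [pow_pos (by linarith : (0 : ℝ) < 1 + y) n]
  have hexp : (1 + y) ^ n ≤ Real.exp (n * y) := by
    rw [Real.exp_nat_mul]
    exact pow_le_pow_left₀ (by linarith) (by linarith [Real.add_one_le_exp y]) n
  calc (1 - n * y) * (1 + y) ^ n ≤ (1 - n * y) * Real.exp (n * y) :=
        mul_le_mul_of_nonneg_left hexp (by linarith)
    _ < Real.exp (-(n * y)) * Real.exp (n * y) := by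
        gcongr
        linarith [Real.add_one_lt_exp (neg_ne_zero.2 hny.ne')]
    _ = 1 := by rw [← Real.exp_add, neg_add_cancel, Real.exp_zero]

section

variable {E ι : Type*} [NormedAddCommGroup E] [InnerProductSpace ℂ E] [Fintype ι]
  {v : ι → E} {u : E} {j : ι}

lemma sq_le_norm_inner_sq_mul_pow (hu : ‖u‖ = 1) (hvj : ‖v j‖ = 1)
    (hpos : 0 < ∏ k, ‖⟪v k, u⟫_ℂ‖)
    (hmax : ∀ w : E, ∏ k, ‖⟪v k, w⟫_ℂ‖ ≤ (∏ k, ‖⟪v k, u⟫_ℂ‖) * ‖w‖ ^ Fintype.card ι)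
    {r : ℝ} (hr : 0 < r) (har : ‖⟪v j, u⟫_ℂ‖ ≤ r) :
    r ^ 2 ≤ ‖⟪v j, u⟫_ℂ‖ ^ 2 * (1 - ‖⟪v j, u⟫_ℂ‖ ^ 2 + r ^ 2) ^ Fintype.card ι := by
  classical
  set n := Fintype.card ι
  set M := ∏ k, ‖⟪v k, u⟫_ℂ‖
  set a := ⟪v j, u⟫_ℂ
  set y := u - a • v j
  have hyj : ⟪v j, y⟫_ℂ = 0 := by simp [y, a, hvj]
  have hya : y + a • v j = u := sub_add_cancel u _
  have hpyth (z : ℂ) : ‖y + z • v j‖ ^ 2 = ‖y‖ ^ 2 + ‖z‖ ^ 2 := by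
    have h := norm_add_sq_eq_norm_sq_add_norm_sq_of_inner_eq_zero (𝕜 := ℂ) y (z • v j)
      (by rw [inner_smul_right, ← inner_conj_symm, hyj, map_zero, mul_zero])
    rw [norm_smul, hvj, mul_one] at h
    linear_combination h
  have hy : ‖y‖ ^ 2 = 1 - ‖a‖ ^ 2 := by
    have h1 := hpyth a
    rw [hya, hu] at h1
    linarith
  have hnorm (z : ℂ) : ‖y + z • v j‖ ^ 2 = 1 - ‖a‖ ^ 2 + ‖z‖ ^ 2 := by rw [hpyth, hy]
  set h : ℂ → ℂ := fun z => ∏ k ∈ univ.erase j, (⟪v k, y⟫_ℂ + z * ⟪v k, v j⟫_ℂ)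
  have hfactor (z : ℂ) : ∏ k, ‖⟪v k, y + z • v j⟫_ℂ‖ = ‖z‖ * ‖h z‖ := by
    rw [← mul_prod_erase _ _ (mem_univ j), norm_prod]
    simp [hyj, hvj]
  have hdiff : Differentiable ℂ h := by fun_prop
  have hsphere : ∀ z ∈ frontier (ball (0 : ℂ) r), ‖h z‖ ≤ M * √(1 - ‖a‖ ^ 2 + r ^ 2) ^ n / r := by
    intro z hz
    rw [frontier_ball 0 hr.ne', mem_sphere_zero_iff_norm] at hz
    rw [le_div_iff₀ hr, mul_comm, ← hz, ← hfactor, ← hnorm, Real.sqrt_sq (norm_nonneg _)]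
    exact hmax _
  have hha : ‖h a‖ ≤ M * √(1 - ‖a‖ ^ 2 + r ^ 2) ^ n / r :=
    Complex.norm_le_of_forall_mem_frontier_norm_le isBounded_ball hdiff.diffContOnCl hsphere
      (by rwa [closure_ball 0 hr.ne', mem_closedBall_zero_iff])
  have hM : M = ‖a‖ * ‖h a‖ := by rw [← hfactor, hya]
  have hr_le : r ≤ ‖a‖ * √(1 - ‖a‖ ^ 2 + r ^ 2) ^ n := by
    refine le_of_mul_le_mul_left ?_ hpos
    calc M * r = ‖a‖ * ‖h a‖ * r := by rw [← hM]
      _ ≤ ‖a‖ * (M * √(1 - ‖a‖ ^ 2 + r ^ 2) ^ n / r) * r := by gcongr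
      _ = M * (‖a‖ * √(1 - ‖a‖ ^ 2 + r ^ 2) ^ n) := by field_simp
  calc r ^ 2 ≤ (‖a‖ * √(1 - ‖a‖ ^ 2 + r ^ 2) ^ n) ^ 2 := pow_le_pow_left₀ hr.le hr_le 2
    _ = ‖a‖ ^ 2 * (1 - ‖a‖ ^ 2 + r ^ 2) ^ n := by
      rw [mul_pow, ← pow_mul, mul_comm n, pow_mul, Real.sq_sqrt (by rw [← hy]; positivity)]

lemma one_le_card_mul_norm_inner_sq (hu : ‖u‖ = 1) (hvj : ‖v j‖ = 1)
    (hpos : 0 < ∏ k, ‖⟪v k, u⟫_ℂ‖)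
    (hmax : ∀ w : E, ∏ k, ‖⟪v k, w⟫_ℂ‖ ≤ (∏ k, ‖⟪v k, u⟫_ℂ‖) * ‖w‖ ^ Fintype.card ι) :
    1 ≤ Fintype.card ι * ‖⟪v j, u⟫_ℂ‖ ^ 2 := by
  set n := Fintype.card ι
  set x := ‖⟪v j, u⟫_ℂ‖ ^ 2
  have hn : 0 < n := Fintype.card_pos_iff.2 ⟨j⟩
  by_contra! hlt
  have hxn : x < 1 / n := by rwa [lt_div_iff₀ (by positivity), mul_comm]
  have hr : (√(1 / n)) ^ 2 = 1 / n := Real.sq_sqrt (by positivity)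
  have key : 1 / n ≤ x * (1 - x + 1 / n) ^ n := by
    simpa only [hr] using sq_le_norm_inner_sq_mul_pow hu hvj hpos hmax (r := √(1 / n))
      (by positivity) ((Real.le_sqrt (norm_nonneg _) (by positivity)).2 hxn.le)
  have hbound : n * x * (1 - x + 1 / n) ^ n < 1 := by
    convert one_sub_mul_mul_one_add_pow_lt_one hn (sub_pos.2 hxn) using 2
    · field_simp
      ring
    · ring
  rw [div_le_iff₀' (by positivity)] at key
  linarith

end

theorem maximizer_ge_one_div_sqrt_general (n d : ℕ)
    (v : Fin n → EuclideanSpace ℂ (Fin d)) (hv : ∀ k, ‖v k‖ = 1)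
    (u : EuclideanSpace ℂ (Fin d)) (hu : ‖u‖ = 1)
    (hmax : ∀ w : EuclideanSpace ℂ (Fin d), ‖w‖ = 1 →
      ∏ k, ‖(inner ℂ (v k) w : ℂ)‖ ≤ ∏ k, ‖(inner ℂ (v k) u : ℂ)‖) :
    ∀ k, 1 / Real.sqrt n ≤ ‖(inner ℂ (v k) u : ℂ)‖ := by
  intro k
  have hbound := prod_norm_inner_le_mul_norm_pow hmax
  have hv0 (i : Fin n) : v i ≠ 0 := norm_ne_zero_iff.1 (by simp [hv i])
  obtain ⟨w, hw⟩ := exists_forall_inner_ne_zero (𝕜 := ℂ) hv0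
  have hpos : 0 < ∏ i, ‖⟪v i, u⟫_ℂ‖ :=
    pos_of_mul_pos_left ((prod_pos fun i _ => norm_pos_iff.2 (hw i)).trans_le (hbound w))
      (by positivity)
  have h := one_le_card_mul_norm_inner_sq hu (hv k) hpos hbound
  rw [Fintype.card_fin] at h
  rw [div_le_iff₀ (Real.sqrt_pos.2 (Nat.cast_pos.2 k.pos))]
  calc 1 ≤ √(n * ‖⟪v k, u⟫_ℂ‖ ^ 2) := Real.one_le_sqrt.2 h
    _ = ‖⟪v k, u⟫_ℂ‖ * √n := by
      rw [Real.sqrt_mul (Nat.cast_nonneg n), Real.sqrt_sq (norm_nonneg _), mul_comm]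

/-- Equal-width case of the complex plank theorem, as a property of maximizers: if a unit
vector `u` maximizes `∏ k, |⟨v k, v⟩|` over unit vectors `v`, then `|⟨v k, u⟩| ≥ 1/√n`
for every `k`. -/
theorem maximizer_ge_one_div_sqrt (n d : ℕ) (hd : 1 ≤ d)
    (v : Fin n → EuclideanSpace ℂ (Fin d)) (hv : ∀ k, ‖v k‖ = 1)
    (u : EuclideanSpace ℂ (Fin d)) (hu : ‖u‖ = 1)
    (hmax : ∀ w : EuclideanSpace ℂ (Fin d), ‖w‖ = 1 →
      ∏ k, ‖(inner ℂ (v k) w : ℂ)‖ ≤ ∏ k, ‖(inner ℂ (v k) u : ℂ)‖) :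
    ∀ k, 1 / Real.sqrt n ≤ ‖(inner ℂ (v k) u : ℂ)‖ :=
  maximizer_ge_one_div_sqrt_general n d v hv u hu hmax
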